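/- Fix positive integers P, M, k with k ≤ M, and P×M real matrices A, B with |A_{ij}| < 1 for all i, j. Then every solution of x_n = k-rank{A_{n̄,1}x_{n-1} + B_{n̄,1}, ..., A_{n̄,M}x_{n-M} + B_{n̄,M}}, where n̄ = 1 + ((n-1) mod P), converges to a unique P-periodic orbit independent of the initial condition. -/

import Mathlib

/-!
Two solutions of the recursion are compared through the sup-distance of their windows of `M`
consecutive values. The `k`-rank is monotone and commutes with adding constants, hence is
`1`-Lipschitz for the sup norm, so one step of the recursion contracts the new entry by `α` and
does not increase the window distance; after `M` steps every entry is renewed and the distance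
has shrunk by `α`. Consequently any two solutions are asymptotic. The window map over `M * P`
steps is then a contraction of `ℝ^M`; its fixed point yields an `M * P`-periodic solution `x`,
and `x` is even `P`-periodic because `x (· + P)` is again an `M * P`-periodic solution, asymptotic
to `x`, hence equal to it. Uniqueness follows the same way.
-/

/-- The `k`-rank of a vector: its `k`-th largest entry (1-indexed, with multiplicity). -/
noncomputable def krank (M k : ℕ) (v : Fin M → ℝ) : ℝ :=
  ((List.ofFn v).insertionSort (· ≥ ·)).getD (k - 1) 0

theorem List.le_getElem_iff_lt_countP {α : Type*} [LinearOrder α] {l : List α}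
    (hl : l.Pairwise (· ≥ ·)) {i : ℕ} (hi : i < l.length) (t : α) :
    t ≤ l[i] ↔ i < l.countP (t ≤ ·) := by
  induction l generalizing i with
  | nil => simp at hi
  | cons a l ih =>
    have ha : ∀ x ∈ l, x ≤ a := fun x hx => List.rel_of_pairwise_cons hl hx
    rw [List.countP_cons]
    cases i with
    | zero =>
      by_cases hta : t ≤ a
      · simp [hta]
      · have hcount : l.countP (t ≤ ·) = 0 :=
          List.countP_eq_zero.2 fun x hx => by simpa using fun h : t ≤ x => hta (h.trans (ha x hx))
        simp [hta, hcount]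
    | succ j =>
      have hj : j < l.length := by simpa using hi
      simp only [List.getElem_cons_succ]
      rw [ih hl.of_cons hj]
      by_cases hta : t ≤ a
      · simp [hta]
      · have hcount : ¬ j < l.countP (t ≤ ·) := by
          rw [← ih hl.of_cons hj]
          exact fun h => hta (h.trans (ha _ (List.getElem_mem _)))
        simp only [decide_eq_true_eq, hta, if_false]
        omega

theorem krank_eq_zero {M k : ℕ} (hk : M ≤ k - 1) (v : Fin M → ℝ) : krank M k v = 0 :=
  List.getD_eq_default _ _ (by simpa using hk)

theorem krank_mono {M k : ℕ} {v w : Fin M → ℝ} (hvw : v ≤ w) : krank M k v ≤ krank M k w := by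
  by_cases hk : k - 1 < M
  · have hv : k - 1 < ((List.ofFn v).insertionSort (· ≥ ·)).length := by simpa using hk
    have hw : k - 1 < ((List.ofFn w).insertionSort (· ≥ ·)).length := by simpa using hk
    rw [krank, krank, List.getD_eq_getElem _ _ hv, List.getD_eq_getElem _ _ hw,
      List.le_getElem_iff_lt_countP (List.pairwise_insertionSort _ _),
      (List.perm_insertionSort _ _).countP_eq]
    set t := ((List.ofFn v).insertionSort (· ≥ ·))[k - 1]
    have hcount : (List.ofFn v).countP (t ≤ ·) ≤ (List.ofFn w).countP (t ≤ ·) := by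
      simp only [List.ofFn_eq_map, List.countP_map]
      exact List.countP_mono_left fun j _ h =>
        decide_eq_true ((of_decide_eq_true h).trans (hvw j))
    refine lt_of_lt_of_le ?_ hcount
    rw [← (List.perm_insertionSort (· ≥ ·) _).countP_eq,
      ← List.le_getElem_iff_lt_countP (List.pairwise_insertionSort _ _) hv]
  · simp [krank_eq_zero (not_lt.1 hk)]

theorem krank_add_const {M k : ℕ} (hk : k - 1 < M) (v : Fin M → ℝ) (c : ℝ) :
    krank M k (fun j => v j + c) = krank M k v + c := by
  have hsort : (List.ofFn fun j => v j + c).insertionSort (· ≥ ·) =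
      ((List.ofFn v).insertionSort (· ≥ ·)).map (· + c) := by
    rw [List.map_insertionSort (· ≥ ·) (· ≥ ·) _ _ fun a _ b _ => (add_le_add_iff_right c).symm,
      List.map_ofFn]
    rfl
  have hv : k - 1 < ((List.ofFn v).insertionSort (· ≥ ·)).length := by simpa using hk
  rw [krank, krank, hsort, List.getD_eq_getElem _ _ (by simpa using hv),
    List.getD_eq_getElem _ _ hv, List.getElem_map]

theorem dist_krank_le {M k : ℕ} (v w : Fin M → ℝ) :
    dist (krank M k v) (krank M k w) ≤ dist v w := by
  by_cases hk : k - 1 < M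
  · have key (v w : Fin M → ℝ) : krank M k v ≤ krank M k w + dist v w := by
      have hvw : v ≤ fun j => w j + dist v w := fun j => by
        linarith [Real.sub_le_dist (v j) (w j), dist_le_pi_dist v w j]
      exact (krank_mono hvw).trans_eq (krank_add_const hk w _)
    rw [Real.dist_eq, abs_sub_le_iff]
    constructor <;> linarith [key v w, key w v, dist_comm v w]
  · simp [krank_eq_zero (not_lt.1 hk)]

open Filter Topology Function

theorem tendsto_zero_of_antitone_of_le_mul {W : ℕ → ℝ} (hW : Antitone W) (hW0 : ∀ n, 0 ≤ W n)
    {α : ℝ} (hα : α < 1) {L : ℕ} (hL : ∀ n, W (n + L) ≤ α * W n) :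
    Tendsto W atTop (𝓝 0) := by
  have hlim : Tendsto W atTop (𝓝 (⨅ n, W n)) :=
    tendsto_atTop_ciInf hW ⟨0, Set.forall_mem_range.2 hW0⟩
  have hle : ⨅ n, W n ≤ α * ⨅ n, W n :=
    le_of_tendsto_of_tendsto' ((tendsto_add_atTop_iff_nat L).2 hlim) (hlim.const_mul α) hL
  have hnonneg : 0 ≤ ⨅ n, W n := le_ciInf hW0
  convert hlim
  nlinarith

theorem Function.Periodic.eq_of_tendsto {X : Type*} [TopologicalSpace X] [T2Space X]
    {f : ℕ → X} {P : ℕ} (hf : Periodic f P) (hP : 0 < P) {c : X}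
    (h : Tendsto f atTop (𝓝 c)) (n : ℕ) : f n = c := by
  have hshift : Tendsto (fun q : ℕ => n + q * P) atTop atTop :=
    tendsto_atTop_mono (fun q => (Nat.le_mul_of_pos_right q hP).trans (Nat.le_add_left _ n))
      tendsto_id
  refine tendsto_nhds_unique ?_ (h.comp hshift)
  exact tendsto_const_nhds.congr fun q => by simpa using ((hf.nat_mul q) n).symm

section RankRecursion

variable {M : ℕ} (k : ℕ) (a d : ℕ → Fin M → ℝ)

-- The coefficients of `x n` are read at index `n - 1`, so that the phase `(n - 1) % P` of the
-- recursion becomes the `P`-periodic sequence `n ↦ A ⟨n % P, _⟩`.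
noncomputable def rankStep (x : ℕ → ℝ) (n : ℕ) : ℝ :=
  krank M k fun j => a (n - 1) j * x (n - 1 - j) + d (n - 1) j

def IsRankSolution (N : ℕ) (x : ℕ → ℝ) : Prop :=
  ∀ n, N ≤ n → x n = rankStep k a d x n

noncomputable def rankSeq (u : Fin M → ℝ) (n : ℕ) : ℝ :=
  if h : n < M then u ⟨n, h⟩
  else krank M k fun j => a (n - 1) j * rankSeq u (n - 1 - j) + d (n - 1) j
termination_by n
decreasing_by omega

variable (M) in
def window (x : ℕ → ℝ) (n : ℕ) : Fin M → ℝ := fun j => x (n + j)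

theorem isRankSolution_rankSeq (u : Fin M → ℝ) : IsRankSolution k a d M (rankSeq k a d u) :=
  fun n hn => by rw [rankSeq, dif_neg (not_lt.2 hn)]; rfl

theorem window_rankSeq_zero (u : Fin M → ℝ) : window M (rankSeq k a d u) 0 = u :=
  funext fun j => by rw [window, rankSeq, dif_pos (by omega)]; simp

theorem dist_le_dist_window (x y : ℕ → ℝ) (n : ℕ) (j : Fin M) :
    dist (x (n + j)) (y (n + j)) ≤ dist (window M x n) (window M y n) :=
  dist_le_pi_dist (window M x n) (window M y n) j

variable {k a d}

theorem IsRankSolution.mono {N N' : ℕ} {x : ℕ → ℝ} (hx : IsRankSolution k a d N x)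
    (hN : N ≤ N') : IsRankSolution k a d N' x :=
  fun n hn => hx n (hN.trans hn)

theorem IsRankSolution.comp_add_right {N L : ℕ} {x : ℕ → ℝ} (hx : IsRankSolution k a d N x)
    (haL : Periodic a L) (hdL : Periodic d L) (hMN : M ≤ N) :
    IsRankSolution k a d N fun n => x (n + L) := by
  intro n hn
  show x (n + L) = _
  rw [hx (n + L) (by omega), rankStep, rankStep]
  congr 1
  funext j
  have := j.isLt
  rw [show n + L - 1 = n - 1 + L by omega, haL, hdL, show n - 1 + L - j = n - 1 - j + L by omega]

theorem dist_rankStep_le {α : ℝ} (ha : ∀ n j, |a n j| ≤ α) (hα0 : 0 ≤ α) (x y : ℕ → ℝ) (n : ℕ) :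
    dist (rankStep k a d x (n + M)) (rankStep k a d y (n + M)) ≤
      α * dist (window M x n) (window M y n) := by
  refine (dist_krank_le _ _).trans <| (dist_pi_le_iff (by positivity)).2 fun j => ?_
  have hidx : n + M - 1 - j = n + (Fin.rev j : ℕ) := by simp only [Fin.val_rev]; omega
  rw [Real.dist_eq, add_sub_add_right_eq_sub, ← mul_sub, abs_mul, hidx, ← Real.dist_eq]
  exact mul_le_mul (ha _ j) (dist_le_dist_window x y n _) (abs_nonneg _) hα0

namespace IsRankSolution

variable {N : ℕ} {x y : ℕ → ℝ} (hx : IsRankSolution k a d N x) (hy : IsRankSolution k a d N y)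
  {α : ℝ} (ha : ∀ n j, |a n j| ≤ α) (hα0 : 0 ≤ α)
include hx hy ha hα0

theorem dist_le_mul_dist_window {n : ℕ} (hn : N ≤ n + M) :
    dist (x (n + M)) (y (n + M)) ≤ α * dist (window M x n) (window M y n) := by
  rw [hx _ hn, hy _ hn]
  exact dist_rankStep_le ha hα0 x y n

theorem dist_window_succ_le (hα1 : α ≤ 1) {n : ℕ} (hn : N ≤ n + M) :
    dist (window M x (n + 1)) (window M y (n + 1)) ≤ dist (window M x n) (window M y n) := by
  refine (dist_pi_le_iff dist_nonneg).2 fun j => ?_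
  rcases lt_or_eq_of_le (Nat.succ_le_of_lt j.isLt) with hj | hj
  · simpa only [window, add_assoc, add_comm 1] using dist_le_dist_window x y n ⟨j + 1, hj⟩
  · have hidx : n + 1 + j = n + M := by omega
    simp only [window, hidx]
    exact (hx.dist_le_mul_dist_window hy ha hα0 hn).trans
      (mul_le_of_le_one_left dist_nonneg hα1)

theorem dist_window_le_of_le (hα1 : α ≤ 1) {n m : ℕ} (hn : N ≤ n + M) (hnm : n ≤ m) :
    dist (window M x m) (window M y m) ≤ dist (window M x n) (window M y n) := by
  induction m, hnm using Nat.le_induction with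
  | base => exact le_rfl
  | succ m hnm ih => exact (hx.dist_window_succ_le hy ha hα0 hα1 (by omega)).trans ih

theorem dist_window_add_le (hα1 : α ≤ 1) {n : ℕ} (hn : N ≤ n + M) :
    dist (window M x (n + M)) (window M y (n + M)) ≤ α * dist (window M x n) (window M y n) := by
  refine (dist_pi_le_iff (by positivity)).2 fun j => ?_
  calc dist (x (n + M + j)) (y (n + M + j)) = dist (x (n + j + M)) (y (n + j + M)) := by
        rw [add_right_comm]
    _ ≤ α * dist (window M x (n + j)) (window M y (n + j)) :=
        hx.dist_le_mul_dist_window hy ha hα0 (by omega)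
    _ ≤ α * dist (window M x n) (window M y n) :=
        mul_le_mul_of_nonneg_left (hx.dist_window_le_of_le hy ha hα0 hα1 hn (by omega)) hα0

theorem eq_of_window_eq (hM : 0 < M) (hα1 : α ≤ 1) {n m : ℕ} (hn : N ≤ n + M)
    (h : window M x n = window M y n) (hnm : n ≤ m) : x m = y m :=
  dist_le_zero.1 <| (dist_le_dist_window x y m ⟨0, hM⟩).trans <|
    (hx.dist_window_le_of_le hy ha hα0 hα1 hn hnm).trans (by rw [h, dist_self])

theorem tendsto_sub (hM : 0 < M) (hα : α < 1) :
    Tendsto (fun n => x n - y n) atTop (𝓝 0) := by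
  have hW : Tendsto (fun i => dist (window M x (N + i)) (window M y (N + i))) atTop (𝓝 0) :=
    tendsto_zero_of_antitone_of_le_mul
      (antitone_nat_of_succ_le fun i =>
        hx.dist_window_succ_le hy ha hα0 hα.le (n := N + i) (by omega))
      (fun _ => dist_nonneg) hα (L := M) fun i => by
        simpa only [add_assoc] using hx.dist_window_add_le hy ha hα0 hα.le (n := N + i) (by omega)
  rw [← tendsto_add_atTop_iff_nat N]
  refine squeeze_zero_norm (fun i => ?_) hW
  rw [← dist_eq_norm, add_comm]
  exact dist_le_dist_window x y (N + i) ⟨0, hM⟩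

end IsRankSolution

theorem exists_periodic_isRankSolution (hM : 0 < M) {P : ℕ} (hP : 0 < P) (haP : Periodic a P)
    (hdP : Periodic d P) {α : ℝ} (ha : ∀ n j, |a n j| ≤ α) (hα0 : 0 ≤ α) (hα : α < 1) :
    ∃ x, IsRankSolution k a d M x ∧ Periodic x P := by
  have hML : M ≤ M * P := Nat.le_mul_of_pos_right M hP
  set F : (Fin M → ℝ) → (Fin M → ℝ) := fun u => window M (rankSeq k a d u) (M * P)
  have hF : ContractingWith α.toNNReal F := by
    refine ⟨Real.toNNReal_lt_one.2 hα, LipschitzWith.of_dist_le_mul fun u v => ?_⟩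
    have hu := isRankSolution_rankSeq k a d u
    have hv := isRankSolution_rankSeq k a d v
    calc dist (F u) (F v)
        ≤ dist (window M (rankSeq k a d u) M) (window M (rankSeq k a d v) M) :=
          hu.dist_window_le_of_le hv ha hα0 hα.le (by omega) hML
      _ ≤ α * dist (window M (rankSeq k a d u) 0) (window M (rankSeq k a d v) 0) := by
          simpa only [zero_add] using hu.dist_window_add_le hv ha hα0 hα.le (n := 0) (by omega)
      _ ≤ α.toNNReal * dist u v := by
          rw [window_rankSeq_zero, window_rankSeq_zero]
          exact mul_le_mul_of_nonneg_right (Real.le_coe_toNNReal α) dist_nonneg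
  obtain ⟨u, hu⟩ : ∃ u, F u = u := ⟨_, hF.fixedPoint_isFixedPt⟩
  obtain ⟨x, hx, hxMP⟩ : ∃ x, IsRankSolution k a d M x ∧ window M x (M * P) = window M x 0 :=
    ⟨rankSeq k a d u, isRankSolution_rankSeq k a d u, hu.trans (window_rankSeq_zero k a d u).symm⟩
  have hwindow : window M (fun n => x (n + M * P)) 0 = window M x 0 := by
    rw [← hxMP]
    ext j
    exact congrArg x (by omega)
  have hxL : Periodic x (M * P) := fun n =>
    (hx.comp_add_right (haP.nat_mul M) (hdP.nat_mul M) le_rfl).eq_of_window_eq hx ha hα0 hM hα.le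
      (by omega) hwindow (Nat.zero_le n)
  refine ⟨x, hx, fun n => sub_eq_zero.1 ?_⟩
  have hdiffL : Periodic (fun n => x (n + P) - x n) (M * P) := fun n => by
    simp only [add_right_comm n (M * P) P, hxL (n + P), hxL n]
  exact hdiffL.eq_of_tendsto (by positivity)
    ((hx.comp_add_right haP hdP le_rfl).tendsto_sub hx ha hα0 hM hα) n

end RankRecursion

theorem affine_rank_type_periodic_general (M P k : ℕ) (hM : 1 ≤ M) (hP : 1 ≤ P)
    (A B : Fin P → Fin M → ℝ)
    (α : ℝ) (hα : α < 1) (hA : ∀ i j, |A i j| ≤ α) :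
    ∃! xs : ℕ → ℝ,
      (∀ n, xs (n + P) = xs n) ∧
      (∀ x : ℕ → ℝ,
        (∀ n, M + 1 ≤ n → x n = krank M k (fun j : Fin M =>
          A ⟨(n - 1) % P, Nat.mod_lt _ hP⟩ j * x (n - 1 - (j : ℕ)) +
          B ⟨(n - 1) % P, Nat.mod_lt _ hP⟩ j)) →
        Filter.Tendsto (fun n => x n - xs n) Filter.atTop (nhds 0)) := by
  have hperiodic (C : Fin P → Fin M → ℝ) : Periodic (fun n => C ⟨n % P, Nat.mod_lt _ hP⟩) P :=
    fun n => by simp only [Nat.add_mod_right]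
  set a := fun n => A ⟨n % P, Nat.mod_lt _ hP⟩
  set d := fun n => B ⟨n % P, Nat.mod_lt _ hP⟩
  have ha : ∀ n j, |a n j| ≤ α := fun n => hA _
  have hα0 : 0 ≤ α := (abs_nonneg _).trans (ha 0 ⟨0, hM⟩)
  obtain ⟨xs, hxs, hxsP⟩ :=
    exists_periodic_isRankSolution (k := k) hM hP (hperiodic A) (hperiodic B) ha hα0 hα
  refine ⟨xs, ⟨hxsP, fun x hx => ?_⟩, fun ys ⟨hysP, hys⟩ => funext fun n => ?_⟩
  · have hx' : IsRankSolution k a d (M + 1) x := hx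
    exact hx'.tendsto_sub (hxs.mono M.le_succ) ha hα0 hM hα
  · exact (sub_eq_zero.1 ((hxsP.sub hysP).eq_of_tendsto hP (hys xs (hxs.mono M.le_succ)) n)).symm

theorem affine_rank_type_periodic (M P k : ℕ) (hM : 1 ≤ M) (hP : 1 ≤ P)
    (hk1 : 1 ≤ k) (hkM : k ≤ M)
    (A B : Fin P → Fin M → ℝ)
    (α : ℝ) (hα : α < 1) (hA : ∀ i j, |A i j| ≤ α)
    (hAij : ∀ i j, |A i j| < 1) :
    ∃! xs : ℕ → ℝ,
      (∀ n, xs (n + P) = xs n) ∧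
      (∀ x : ℕ → ℝ,
        (∀ n, M + 1 ≤ n → x n = krank M k (fun j : Fin M =>
          A ⟨(n - 1) % P, Nat.mod_lt _ hP⟩ j * x (n - 1 - (j : ℕ)) +
          B ⟨(n - 1) % P, Nat.mod_lt _ hP⟩ j)) →
        Filter.Tendsto (fun n => x n - xs n) Filter.atTop (nhds 0)) :=
  affine_rank_type_periodic_general M P k hM hP A B α hα hA
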